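/- arXiv:1005.1622 — 2 statements merged into one kernel-verified Lean document; each statement's English description precedes it below -/
import Mathlib

section
/- Let π ⊆ ℝ^k be a rational linear subspace, i.e., π_ℤ = π ∩ ℤ^k is a lattice in π. Then the (dim π)-dimensional Lebesgue volume of π ∩ [0,1]^k is at most the covolume of the lattice π_ℤ in π. -/
open Function MeasureTheory Pointwise

/-! The points of `π` whose coordinates lie in `[0, 1)` have pairwise disjoint translates by
`π_ℤ`, since two of them differing by an integer vector coincide coordinatewise; so this
half-open box has volume at most that of a fundamental domain, i.e. at most `covol(π_ℤ)`.
The closed box differs from it only inside finitely many hyperplanes `x i = 1`, which are null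
in `π`. -/

theorem MeasureTheory.Measure.addHaar_preimage_singleton_eq_zero {E : Type*}
    [NormedAddCommGroup E] [NormedSpace ℝ E] [MeasurableSpace E] [BorelSpace E]
    [FiniteDimensional ℝ E] (μ : Measure E) [μ.IsAddHaarMeasure] (f : E →ₗ[ℝ] ℝ)
    {c : ℝ} (hc : c ≠ 0) : μ (f ⁻¹' {c}) = 0 := by
  rcases (f ⁻¹' {c}).eq_empty_or_nonempty with hempty | ⟨x₀, hx₀ : f x₀ = c⟩
  · rw [hempty, measure_empty]
  have hker : LinearMap.ker f ≠ ⊤ := by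
    rw [Ne, LinearMap.ker_eq_top]
    rintro rfl
    exact hc hx₀.symm
  have hfiber : f ⁻¹' {c} = (· + -x₀) ⁻¹' (LinearMap.ker f : Set E) := by
    ext x
    simp only [Set.mem_preimage, Set.mem_singleton_iff, SetLike.mem_coe, LinearMap.mem_ker,
      ← sub_eq_add_neg, map_sub, hx₀, sub_eq_zero]
  rw [hfiber, measure_preimage_add_right]
  exact Measure.addHaar_submodule μ _ hker

theorem ZLattice.measure_le_ofReal_covolume {E : Type*} [NormedAddCommGroup E]
    [NormedSpace ℝ E] [FiniteDimensional ℝ E] [MeasurableSpace E] [BorelSpace E]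
    (L : Submodule ℤ E) [DiscreteTopology L] [IsZLattice ℝ L] (μ : Measure E)
    [μ.IsAddHaarMeasure] {t : Set E} (ht : NullMeasurableSet t μ)
    (hd : Pairwise (Disjoint on fun g : L => g +ᵥ t)) :
    μ t ≤ ENNReal.ofReal (ZLattice.covolume L μ) := by
  have : MeasurableVAdd L E := (inferInstance : MeasurableVAdd L.toAddSubgroup E)
  have : VAddInvariantMeasure L E μ :=
    (inferInstance : VAddInvariantMeasure L.toAddSubgroup E μ)
  let b := (Module.Free.chooseBasis ℤ L).ofZLatticeBasis ℝ
  have hF := ZLattice.isAddFundamentalDomain (Module.Free.chooseBasis ℤ L) μ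
  have hFfin : μ (ZSpan.fundamentalDomain b) ≠ ⊤ :=
    (ZSpan.fundamentalDomain_isBounded b).measure_lt_top.ne
  rw [ZLattice.covolume_eq_measure_fundamentalDomain L μ hF, measureReal_def,
    ENNReal.ofReal_toReal hFfin]
  exact hF.measure_le_of_pairwise_disjoint ht fun g₁ g₂ hne =>
    ((hd hne).mono Set.inter_subset_left Set.inter_subset_left).aedisjoint

section RationalSubspace

variable {ι : Type*} (π : Submodule ℝ (EuclideanSpace ℝ ι))

theorem volume_Icc_cube_le_volume_Ico_cube [Fintype ι] (μ : Measure π) [μ.IsAddHaarMeasure] :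
    μ {x : π | ∀ i, (x : EuclideanSpace ℝ ι) i ∈ Set.Icc (0 : ℝ) 1} ≤
      μ {x : π | ∀ i, (x : EuclideanSpace ℝ ι) i ∈ Set.Ico (0 : ℝ) 1} := by
  have hfaces : μ (⋃ i, {x : π | (x : EuclideanSpace ℝ ι) i = 1}) = 0 :=
    measure_iUnion_null fun i => Measure.addHaar_preimage_singleton_eq_zero μ
      ((EuclideanSpace.projₗ i).comp π.subtype) one_ne_zero
  refine measure_mono_ae (ae_le_set.2 (measure_mono_null ?_ hfaces))
  rintro x ⟨hIcc, hIco⟩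
  obtain ⟨i, hi⟩ := not_forall.1 hIco
  exact Set.mem_iUnion.2 ⟨i, (hIcc i).2.eq_of_not_lt fun h => hi ⟨(hIcc i).1, h⟩⟩

theorem measurableSet_Ico_cube [Fintype ι] :
    MeasurableSet {x : π | ∀ i, (x : EuclideanSpace ℝ ι) i ∈ Set.Ico (0 : ℝ) 1} := by
  measurability

theorem pairwise_disjoint_vadd_Ico_cube (L : Submodule ℤ π)
    (hL : ∀ x ∈ L, ∀ i, ∃ m : ℤ, (x : EuclideanSpace ℝ ι) i = m) :
    Pairwise (Disjoint on fun g : L =>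
      g +ᵥ {x : π | ∀ i, (x : EuclideanSpace ℝ ι) i ∈ Set.Ico (0 : ℝ) 1}) := by
  intro g₁ g₂ hne
  refine Set.disjoint_left.2 ?_
  rintro _ ⟨a, ha, rfl⟩ ⟨c, hc, hca : (g₂ : π) + c = g₁ + a⟩
  have hdiff : a - c = (g₂ : π) - g₁ := by rw [sub_eq_sub_iff_add_eq_add, hca, add_comm]
  have hac : a = c := by
    ext i
    obtain ⟨m, hm⟩ := hL _ (L.sub_mem g₂.2 g₁.2) i
    rw [← Int.fract_eq_self.2 (ha i), ← Int.fract_eq_self.2 (hc i)]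
    refine Int.fract_eq_fract.2 ⟨m, ?_⟩
    rw [← hm, ← hdiff]
    rfl
  exact hne (Subtype.ext (add_right_cancel (hac ▸ hca.symm)))

end RationalSubspace

theorem stmt_9_general (k : ℕ) (π : Submodule ℝ (EuclideanSpace ℝ (Fin k)))
    (L : Submodule ℤ π)
    (hL : ∀ x : π, x ∈ L ↔ ∀ i, ∃ m : ℤ, (x : EuclideanSpace ℝ (Fin k)) i = (m : ℝ))
    [DiscreteTopology L] [IsZLattice ℝ L] :
    volume {x : π | ∀ i, (x : EuclideanSpace ℝ (Fin k)) i ∈ Set.Icc (0 : ℝ) 1} ≤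
      ENNReal.ofReal (ZLattice.covolume L) := by
  exact (volume_Icc_cube_le_volume_Ico_cube π volume).trans
    (ZLattice.measure_le_ofReal_covolume L volume (measurableSet_Ico_cube π).nullMeasurableSet
      (pairwise_disjoint_vadd_Ico_cube π L fun x hx => (hL x).1 hx))

/-- Let `π ⊆ ℝ^k` be a rational linear subspace (spanned by vectors with rational
coordinates), and let `L = π ∩ ℤ^k`, a full-rank lattice in `π`. Then the
`dim π`-dimensional Lebesgue volume of `π ∩ [0,1]^k` is at most the covolume of `L` in `π`. -/
theorem stmt_9 (k : ℕ) (π : Submodule ℝ (EuclideanSpace ℝ (Fin k)))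
    (hrat : ∃ s : Set (EuclideanSpace ℝ (Fin k)),
      (∀ v ∈ s, ∀ i, ∃ q : ℚ, v i = (q : ℝ)) ∧ Submodule.span ℝ s = π)
    (L : Submodule ℤ π)
    (hL : ∀ x : π, x ∈ L ↔ ∀ i, ∃ m : ℤ, (x : EuclideanSpace ℝ (Fin k)) i = (m : ℝ))
    [DiscreteTopology L] [IsZLattice ℝ L] :
    volume {x : π | ∀ i, (x : EuclideanSpace ℝ (Fin k)) i ∈ Set.Icc (0 : ℝ) 1} ≤
      ENNReal.ofReal (ZLattice.covolume L) :=
  stmt_9_general k π L hL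
end

section
/- Let π ⊆ ℝ^k be a rational linear subspace with lattice π_ℤ = π ∩ ℤ^k. If the volume of π ∩ [0,1]^k equals covol(π_ℤ), then π_ℤ has a ℤ-basis e₁, …, e_l consisting of vectors with entries in {0,1} such that no two basis vectors have a 1 in the same coordinate (i.e., the supports of the e_i are pairwise disjoint). -/
/-!
Choose `d = dim π` coordinates of `ℝ^k` that are independent on `π`: the projection
`φ : π ≃ ℝ^d` onto them maps `L` into `ℤ^d` and the cube section `C` into the unit cube `Q`.
Since `φ` carries the Lebesgue measure of `π` to a multiple of that of `ℝ^d`, the hypothesis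
`vol C = covol L` becomes `covol (φ L) = vol (φ C) ≤ vol Q = 1`, and a sublattice of `ℤ^d` of
covolume at most one is `ℤ^d` itself. So `φ C` is a closed subset of `Q` of full measure, hence
all of `Q`. The preimages of the standard basis vectors then form a `ℤ`-basis of `L` which lies
in `C` together with all pairwise sums; integrality forces entries in `{0, 1}` and disjoint
supports.
-/

open MeasureTheory Submodule

theorem LinearMap.exists_injective_pi_comp {K V ι : Type*} [Field K] [AddCommGroup V]
    [Module K V] [FiniteDimensional K V] (f : ι → Module.Dual K V)
    (hf : Function.Injective (LinearMap.pi f)) :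
    ∃ g : Fin (Module.finrank K V) → ι, Function.Injective (LinearMap.pi fun j => f (g j)) := by
  have hspan : span K (Set.range f) = ⊤ := by
    refine eq_top_iff.2 fun φ _ => FiniteDimensional.mem_span_of_iInf_ker_le_ker fun x hx => ?_
    have hx0 : x = 0 := hf <| by
      ext i
      simpa using (mem_iInf _).1 hx i
    simp [hx0]
  obtain ⟨κ, a, -, hsp, hli⟩ := exists_linearIndependent' K f
  let B : Module.Basis κ K (Module.Dual K V) := .mk hli (by rw [hsp, hspan])
  have : Fintype κ := FiniteDimensional.fintypeBasisIndex B
  have hcard : Fintype.card κ = Module.finrank K V := by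
    rw [← Module.finrank_eq_card_basis B, Subspace.dual_finrank_eq]
  let e : Fin (Module.finrank K V) ≃ κ := (Fintype.equivFinOfCardEq hcard).symm
  refine ⟨a ∘ e, (injective_iff_map_eq_zero _).2 fun x hx => ?_⟩
  have hB : Module.Dual.eval K V x = 0 := B.ext fun c => by
    simpa [B] using congrFun hx (e.symm c)
  exact (Module.forall_dual_apply_eq_zero_iff K x).1 fun φ => LinearMap.congr_fun hB φ

theorem EuclideanSpace.exists_continuousLinearEquiv_apply_eq_coord {ι : Type*} [Fintype ι]
    (π : Submodule ℝ (EuclideanSpace ℝ ι)) :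
    ∃ (g : Fin (Module.finrank ℝ π) → ι) (φ : π ≃L[ℝ] (Fin (Module.finrank ℝ π) → ℝ)),
      ∀ x j, φ x j = (x : EuclideanSpace ℝ ι) (g j) := by
  let f : ι → Module.Dual ℝ π := fun i => (EuclideanSpace.proj i).toLinearMap ∘ₗ π.subtype
  obtain ⟨g, hg⟩ := LinearMap.exists_injective_pi_comp f fun x y hxy => by
    ext i
    exact congrFun hxy i
  exact ⟨g, (LinearMap.linearEquivOfInjective _ hg (by simp)).toContinuousLinearEquiv,
    fun _ _ => rfl⟩

theorem MeasureTheory.Measure.addHaar_image_eq_of_measure_eq {E F : Type*}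
    [NormedAddCommGroup E] [NormedSpace ℝ E] [FiniteDimensional ℝ E] [MeasurableSpace E]
    [BorelSpace E] [NormedAddCommGroup F] [NormedSpace ℝ F] [FiniteDimensional ℝ F]
    [MeasurableSpace F] [BorelSpace F] (μ : Measure E) [μ.IsAddHaarMeasure]
    (ν : Measure F) [ν.IsAddHaarMeasure] (φ : E ≃L[ℝ] F) {s t : Set E} (h : μ s = μ t) :
    ν (φ '' s) = ν (φ '' t) := by
  set e := φ.toHomeomorph.toMeasurableEquiv
  have hmap : ∀ u : Set E, μ.map e (φ '' u) = μ u := fun u => by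
    rw [e.map_apply]
    exact congrArg μ (φ.toEquiv.preimage_image u)
  obtain ⟨c, hc, hsmul⟩ : ∃ c : NNReal, c ≠ 0 ∧ μ.map e = c • ν :=
    have : (μ.map e).IsAddHaarMeasure := φ.isAddHaarMeasure_map μ
    ⟨_, (Measure.addHaarScalarFactor_pos_of_isAddHaarMeasure _ ν).ne',
      Measure.isAddLeftInvariant_eq_smul _ ν⟩
  have hscale : ∀ u : Set E, μ u = c * ν (φ '' u) := fun u => by
    rw [← hmap u, hsmul]
    rfl
  rw [hscale, hscale] at h
  exact (ENNReal.mul_right_inj (by exact_mod_cast hc) ENNReal.coe_ne_top).1 h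

theorem MeasureTheory.subset_of_isClosed_of_measure_le {X : Type*} [TopologicalSpace X]
    [MeasurableSpace X] [OpensMeasurableSpace X] (μ : Measure X) [μ.IsOpenPosMeasure]
    {S T : Set X} (hS : IsClosed S) (hST : S ⊆ T) (hT : T ⊆ closure (interior T))
    (hμT : μ T ≠ ⊤) (h : μ T ≤ μ S) : T ⊆ S := by
  have hnull : μ (interior T \ S) = 0 := by
    refine measure_mono_null (Set.sdiff_subset_sdiff_left interior_subset) ?_
    rw [measure_sdiff hST hS.measurableSet.nullMeasurableSet (ne_top_of_le_ne_top hμT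
      (measure_mono hST)), tsub_eq_zero_of_le h]
  have hint : interior T ⊆ S := Set.sdiff_eq_empty.1 <|
    (isOpen_interior.sdiff hS).measure_eq_zero_iff μ |>.1 hnull
  exact hT.trans (hS.closure_subset_iff.2 hint)

def unitCube (ι : Type*) : Set (ι → ℝ) := Set.univ.pi fun _ => Set.Icc 0 1

theorem mem_unitCube {ι : Type*} {x : ι → ℝ} : x ∈ unitCube ι ↔ ∀ i, x i ∈ Set.Icc 0 1 :=
  Set.mem_univ_pi

theorem volume_unitCube (ι : Type*) [Fintype ι] : volume (unitCube ι) = 1 := by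
  rw [unitCube, Set.pi_univ_Icc, Real.volume_Icc_pi]
  simp

theorem unitCube_subset_closure_interior (ι : Type*) [Finite ι] :
    unitCube ι ⊆ closure (interior (unitCube ι)) := by
  rw [unitCube, interior_pi_set Set.finite_univ, closure_pi_set]
  simp

theorem single_mem_unitCube {ι : Type*} [DecidableEq ι] (j : ι) :
    Pi.single j 1 ∈ unitCube ι :=
  mem_unitCube.2 fun i => by by_cases h : i = j <;> simp [h]

theorem single_add_single_mem_unitCube {ι : Type*} [DecidableEq ι] {j j' : ι} (hj : j ≠ j') :
    Pi.single j 1 + Pi.single j' 1 ∈ unitCube ι :=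
  mem_unitCube.2 fun i => by by_cases h : i = j <;> by_cases h' : i = j' <;> simp_all

theorem ZLattice.covolume_span_basisFun (ι : Type*) [Fintype ι] :
    covolume (span ℤ (Set.range (Pi.basisFun ℝ ι))) = 1 := by
  classical
  rw [covolume_eq_det _ ((Pi.basisFun ℝ ι).restrictScalars ℤ)]
  have : Matrix.of (((↑) : span ℤ (Set.range (Pi.basisFun ℝ ι)) → ι → ℝ) ∘
      (Pi.basisFun ℝ ι).restrictScalars ℤ) = 1 := by
    ext i j
    simp [Module.Basis.restrictScalars_apply, Matrix.one_apply, Pi.single_apply, eq_comm]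
  simp [this]

theorem ZLattice.eq_span_basisFun_of_le_of_covolume_le_one {ι : Type*} [Fintype ι]
    (L : Submodule ℤ (ι → ℝ)) [DiscreteTopology L] [IsZLattice ℝ L]
    (hle : L ≤ span ℤ (Set.range (Pi.basisFun ℝ ι))) (hcov : covolume L ≤ 1) :
    L = span ℤ (Set.range (Pi.basisFun ℝ ι)) := by
  have hindex := covolume_div_covolume_eq_relIndex _ _ hle
  rw [covolume_span_basisFun, div_one] at hindex
  have hone :
      L.toAddSubgroup.relIndex (span ℤ (Set.range (Pi.basisFun ℝ ι))).toAddSubgroup = 1 := by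
    have hpos := covolume_pos L
    rw [hindex] at hpos hcov
    exact le_antisymm (by exact_mod_cast hcov) (by exact_mod_cast hpos)
  exact le_antisymm hle (AddSubgroup.relIndex_eq_one.1 hone)

theorem ZLattice.ofReal_covolume_comap_symm_eq_measure_image {E F : Type*}
    [NormedAddCommGroup E] [NormedSpace ℝ E] [FiniteDimensional ℝ E] [MeasurableSpace E]
    [BorelSpace E] [NormedAddCommGroup F] [NormedSpace ℝ F] [FiniteDimensional ℝ F]
    [MeasurableSpace F] [BorelSpace F] (μ : Measure E) [μ.IsAddHaarMeasure]
    (ν : Measure F) [ν.IsAddHaarMeasure] (L : Submodule ℤ E) [DiscreteTopology L]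
    [IsZLattice ℝ L] (φ : E ≃L[ℝ] F) {s : Set E} (hs : μ s = ENNReal.ofReal (covolume L μ)) :
    ENNReal.ofReal (covolume (ZLattice.comap ℝ L φ.symm.toLinearMap) ν) = ν (φ '' s) := by
  let b := Module.Free.chooseBasis ℤ L
  set D := ZSpan.fundamentalDomain (b.ofZLatticeBasis ℝ L)
  have hD : μ D = μ s := by
    rw [hs, covolume_eq_measure_fundamentalDomain L μ (isAddFundamentalDomain b μ),
      ofReal_measureReal (ZSpan.fundamentalDomain_isBounded _).measure_lt_top.ne]
  have hdomain : ZSpan.fundamentalDomain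
      ((b.ofZLatticeComap ℝ L φ.symm.toLinearEquiv).ofZLatticeBasis ℝ
        (ZLattice.comap ℝ L φ.symm.toLinearMap)) = φ '' D := by
    rw [Module.Basis.ofZLatticeBasis_comap, ← ZSpan.map_fundamentalDomain]
    rfl
  rw [covolume_eq_measure_fundamentalDomain _ ν
      (isAddFundamentalDomain (b.ofZLatticeComap ℝ L φ.symm.toLinearEquiv) ν),
    ofReal_measureReal (ZSpan.fundamentalDomain_isBounded _).measure_lt_top.ne, hdomain,
    Measure.addHaar_image_eq_of_measure_eq μ ν φ hD]

section ImageInUnitCube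

variable {E : Type*} [NormedAddCommGroup E] [NormedSpace ℝ E] [FiniteDimensional ℝ E]
  [MeasurableSpace E] [BorelSpace E] (μ : Measure E) [μ.IsAddHaarMeasure] {ι : Type*}
  [Fintype ι] (L : Submodule ℤ E) [DiscreteTopology L] [IsZLattice ℝ L] (φ : E ≃L[ℝ] (ι → ℝ))
  {s : Set E}

theorem ZLattice.comap_symm_eq_span_basisFun (hint : ∀ x ∈ L, ∀ i, ∃ m : ℤ, φ x i = m)
    (hs : μ s = ENNReal.ofReal (covolume L μ)) (hsub : φ '' s ⊆ unitCube ι) :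
    ZLattice.comap ℝ L φ.symm.toLinearMap = span ℤ (Set.range (Pi.basisFun ℝ ι)) := by
  refine eq_span_basisFun_of_le_of_covolume_le_one _ (fun y hy => ?_) ?_
  · refine ((Pi.basisFun ℝ ι).mem_span_iff_repr_mem ℤ y).2 fun i => ?_
    obtain ⟨m, hm⟩ := hint _ hy i
    exact ⟨m, by simpa using hm.symm⟩
  · refine ENNReal.ofReal_le_one.1 ?_
    rw [ofReal_covolume_comap_symm_eq_measure_image μ volume L φ hs, ← volume_unitCube ι]
    exact measure_mono hsub

theorem ZLattice.unitCube_subset_image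
    (hL : ZLattice.comap ℝ L φ.symm.toLinearMap = span ℤ (Set.range (Pi.basisFun ℝ ι)))
    (hs : μ s = ENNReal.ofReal (covolume L μ)) (hclosed : IsClosed s)
    (hsub : φ '' s ⊆ unitCube ι) : unitCube ι ⊆ φ '' s := by
  have hvol : volume (φ '' s) = 1 := by
    rw [← ofReal_covolume_comap_symm_eq_measure_image μ volume L φ hs, hL,
      covolume_span_basisFun, ENNReal.ofReal_one]
  refine subset_of_isClosed_of_measure_le volume (φ.toHomeomorph.isClosed_image.2 hclosed) hsub
    (unitCube_subset_closure_interior ι) ?_ ?_ <;> simp [volume_unitCube, hvol]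

end ImageInUnitCube

theorem ZLattice.exists_basis_coe_eq_symm_single {E : Type*} [NormedAddCommGroup E]
    [NormedSpace ℝ E] (L : Submodule ℤ E) {ι : Type*} [Fintype ι] [DecidableEq ι]
    (φ : E ≃L[ℝ] (ι → ℝ))
    (hL : ZLattice.comap ℝ L φ.symm.toLinearMap = span ℤ (Set.range (Pi.basisFun ℝ ι))) :
    ∃ b : Module.Basis ι ℤ L, ∀ j, (b j : E) = φ.symm (Pi.single j 1) :=
  ⟨((Pi.basisFun ℝ ι).restrictScalars ℤ).map
    ((LinearEquiv.ofEq _ _ hL.symm).trans (comap_equiv ℝ L φ.symm.toLinearEquiv).symm),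
    fun j => by
      set z := LinearEquiv.ofEq _ _ hL.symm ((Pi.basisFun ℝ ι).restrictScalars ℤ j)
      have hz : (z : ι → ℝ) = Pi.single j 1 :=
        (LinearEquiv.coe_ofEq_apply hL.symm _).trans <|
          ((Pi.basisFun ℝ ι).restrictScalars_apply ℤ j).trans (Pi.basisFun_apply ℝ ι j)
      rw [← hz, Module.Basis.map_apply, LinearEquiv.trans_apply]
      exact (φ.symm_apply_apply _).symm.trans <| congrArg (φ.symm ∘ Subtype.val)
        ((comap_equiv ℝ L φ.symm.toLinearEquiv).apply_symm_apply z)⟩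

theorem eq_zero_or_eq_one_of_mem_Icc_of_eq_intCast {x : ℝ} {m : ℤ} (hm : x = m)
    (hx : x ∈ Set.Icc 0 1) : x = 0 ∨ x = 1 := by
  subst hm
  obtain ⟨h0, h1⟩ : 0 ≤ m ∧ m ≤ 1 := by exact_mod_cast Set.mem_Icc.1 hx
  interval_cases m <;> simp

theorem eq_zero_or_eq_zero_of_add_mem_Icc {x y : ℝ} (hx : x = 0 ∨ x = 1) (hy : y = 0 ∨ y = 1)
    (hxy : x + y ∈ Set.Icc 0 1) : x = 0 ∨ y = 0 := by
  rcases hx with rfl | rfl <;> rcases hy with rfl | rfl <;> simp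
  norm_num at hxy

theorem stmt_10_general (k : ℕ) (π : Submodule ℝ (EuclideanSpace ℝ (Fin k)))
    (L : Submodule ℤ π)
    (hL : ∀ x : π, x ∈ L ↔ ∀ i, ∃ m : ℤ, (x : EuclideanSpace ℝ (Fin k)) i = (m : ℝ))
    [DiscreteTopology L] [IsZLattice ℝ L]
    (hvol : volume {x : π | ∀ i, (x : EuclideanSpace ℝ (Fin k)) i ∈ Set.Icc (0 : ℝ) 1} =
      ENNReal.ofReal (ZLattice.covolume L)) :
    ∃ (l : ℕ) (b : Module.Basis (Fin l) ℤ L),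
      (∀ (i : Fin l) (j : Fin k),
        ((b i : π) : EuclideanSpace ℝ (Fin k)) j = 0 ∨
        ((b i : π) : EuclideanSpace ℝ (Fin k)) j = 1) ∧
      (∀ i i' : Fin l, i ≠ i' → ∀ j : Fin k,
        ((b i : π) : EuclideanSpace ℝ (Fin k)) j = 0 ∨
        ((b i' : π) : EuclideanSpace ℝ (Fin k)) j = 0) := by
  set C := {x : π | ∀ i, (x : EuclideanSpace ℝ (Fin k)) i ∈ Set.Icc (0 : ℝ) 1}
  obtain ⟨g, φ, hφ⟩ := EuclideanSpace.exists_continuousLinearEquiv_apply_eq_coord π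
  have hCclosed : IsClosed C := by
    simp only [C, Set.ofPred_forall]
    exact isClosed_iInter fun i => isClosed_Icc.preimage (by fun_prop)
  have hCsub : φ '' C ⊆ unitCube _ := by
    rintro _ ⟨x, hx, rfl⟩
    exact mem_unitCube.2 fun j => hφ x j ▸ hx (g j)
  have hZ := ZLattice.comap_symm_eq_span_basisFun volume L φ
    (fun x hx j => hφ x j ▸ (hL x).1 hx (g j)) hvol hCsub
  have hmemC : ∀ y ∈ unitCube _, φ.symm y ∈ C := fun y hy => by
    obtain ⟨x, hx, rfl⟩ := ZLattice.unitCube_subset_image volume L φ hZ hvol hCclosed hCsub hy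
    simpa using hx
  obtain ⟨b, hb⟩ := ZLattice.exists_basis_coe_eq_symm_single L φ hZ
  have h01 : ∀ j i, ((b j : π) : EuclideanSpace ℝ (Fin k)) i = 0 ∨
      ((b j : π) : EuclideanSpace ℝ (Fin k)) i = 1 := fun j i => by
    obtain ⟨m, hm⟩ := (hL _).1 (b j).2 i
    exact eq_zero_or_eq_one_of_mem_Icc_of_eq_intCast hm (hb j ▸ hmemC _ (single_mem_unitCube j) i)
  refine ⟨_, b, h01, fun j j' hjj' i => eq_zero_or_eq_zero_of_add_mem_Icc (h01 j i) (h01 j' i) ?_⟩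
  simpa [hb] using hmemC _ (single_add_single_mem_unitCube hjj') i

/-- Let `π ⊆ ℝ^k` be a rational linear subspace with lattice `L = π ∩ ℤ^k`. If the volume of
`π ∩ [0,1]^k` equals the covolume of `L`, then `L` has a `ℤ`-basis consisting of `0–1` vectors
with pairwise disjoint supports. -/
theorem stmt_10 (k : ℕ) (π : Submodule ℝ (EuclideanSpace ℝ (Fin k)))
    (hrat : ∃ s : Set (EuclideanSpace ℝ (Fin k)),
      (∀ v ∈ s, ∀ i, ∃ q : ℚ, v i = (q : ℝ)) ∧ Submodule.span ℝ s = π)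
    (L : Submodule ℤ π)
    (hL : ∀ x : π, x ∈ L ↔ ∀ i, ∃ m : ℤ, (x : EuclideanSpace ℝ (Fin k)) i = (m : ℝ))
    [DiscreteTopology L] [IsZLattice ℝ L]
    (hvol : volume {x : π | ∀ i, (x : EuclideanSpace ℝ (Fin k)) i ∈ Set.Icc (0 : ℝ) 1} =
      ENNReal.ofReal (ZLattice.covolume L)) :
    ∃ (l : ℕ) (b : Module.Basis (Fin l) ℤ L),
      (∀ (i : Fin l) (j : Fin k),
        ((b i : π) : EuclideanSpace ℝ (Fin k)) j = 0 ∨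
        ((b i : π) : EuclideanSpace ℝ (Fin k)) j = 1) ∧
      (∀ i i' : Fin l, i ≠ i' → ∀ j : Fin k,
        ((b i : π) : EuclideanSpace ℝ (Fin k)) j = 0 ∨
        ((b i' : π) : EuclideanSpace ℝ (Fin k)) j = 0) :=
  stmt_10_general k π L hL hvol
end
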